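/- arXiv:1707.07368 — 3 statements merged into one kernel-verified Lean document; each statement's English description precedes it below -/
import Mathlib

section
/- Let H be a complex inner product space of dimension at least 2, let |0⟩, |1⟩ be orthonormal vectors in H, let |+⟩ = (|0⟩+|1⟩)/√2, and let A = |0⟩⟨0| and B = |+⟩⟨+|. Then there is no self-adjoint operator H₀ on H such that H₀, A - H₀, B - H₀, and I - A - B + H₀ are all positive semidefinite. -/
/-!
If `0 ≤ H ≤ |a⟩⟨a|` then `H` vanishes on `a^⊥`, and likewise for `b`. For unit vectors with
`c = ⟨a, b⟩`, the vector `(1 - |c|²) b = c (a - c̄ b) + (b - c a)` is a sum of a vector orthogonal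
to `b` and one orthogonal to `a`, so `H b = 0` as soon as `|c| ≠ 1`. Testing `I - A - B + H` on `b`
then gives `⟨b, (I - A - B + H) b⟩ = -|c|²`, which is negative unless `a ⊥ b`. For `a = |0⟩` and
`b = |+⟩` we have `c = 1/√2`.
-/

open ComplexOrder Matrix

namespace Matrix

variable {𝕜 m : Type*} [RCLike 𝕜] [Fintype m]

theorem vecMulVec_star_mulVec (a x : m → 𝕜) :
    vecMulVec a (star a) *ᵥ x = (star a ⬝ᵥ x) • a := by
  rw [vecMulVec_mulVec, op_smul_eq_smul]

theorem PosSemidef.mulVec_eq_zero_of_sub {H M : Matrix m m 𝕜} (hH : H.PosSemidef)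
    (hMH : (M - H).PosSemidef) {x : m → 𝕜} (hx : M *ᵥ x = 0) : H *ᵥ x = 0 := by
  refine (hH.dotProduct_mulVec_zero_iff x).mp (le_antisymm ?_ (hH.dotProduct_mulVec_nonneg x))
  have := hMH.dotProduct_mulVec_nonneg x
  rwa [sub_mulVec, hx, zero_sub, dotProduct_neg, neg_nonneg] at this

theorem PosSemidef.mulVec_eq_zero_of_orthogonal {H : Matrix m m 𝕜} {a x : m → 𝕜}
    (hH : H.PosSemidef) (haH : (vecMulVec a (star a) - H).PosSemidef) (hx : star a ⬝ᵥ x = 0) :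
    H *ᵥ x = 0 :=
  hH.mulVec_eq_zero_of_sub haH (by rw [vecMulVec_star_mulVec, hx, zero_smul])

theorem PosSemidef.mulVec_eq_zero_of_le_vecMulVec_of_le_vecMulVec {a b : m → 𝕜}
    (ha : star a ⬝ᵥ a = 1) (hb : star b ⬝ᵥ b = 1) (hab : ‖star a ⬝ᵥ b‖ ≠ 1)
    {H : Matrix m m 𝕜} (hH : H.PosSemidef) (hAH : (vecMulVec a (star a) - H).PosSemidef)
    (hBH : (vecMulVec b (star b) - H).PosSemidef) : H *ᵥ b = 0 := by
  set c := star a ⬝ᵥ b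
  have hHr : H *ᵥ (b - c • a) = 0 := hH.mulVec_eq_zero_of_orthogonal hAH <| by
    rw [dotProduct_sub, dotProduct_smul, ha, smul_eq_mul, mul_one, sub_self]
  have hHs : H *ᵥ (a - star c • b) = 0 := hH.mulVec_eq_zero_of_orthogonal hBH <| by
    rw [dotProduct_sub, dotProduct_smul, hb, star_dotProduct b a, smul_eq_mul, mul_one, sub_self]
  have hcomb : (1 - c * star c) • b = c • (a - star c • b) + (b - c • a) := by module
  have hne : 1 - c * star c ≠ 0 := by
    rw [RCLike.star_def, RCLike.mul_conj, sub_ne_zero, ne_comm]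
    exact_mod_cast fun h ↦ hab (by nlinarith [norm_nonneg c])
  have := congrArg (H *ᵥ ·) hcomb
  simp only [mulVec_smul, mulVec_add, hHr, hHs, smul_zero, add_zero] at this
  exact (smul_eq_zero.mp this).resolve_left hne

theorem not_posSemidef_one_sub_vecMulVec_sub_vecMulVec_add [DecidableEq m] {a b : m → 𝕜}
    (ha : star a ⬝ᵥ a = 1) (hb : star b ⬝ᵥ b = 1)
    (hab₀ : star a ⬝ᵥ b ≠ 0) (hab₁ : ‖star a ⬝ᵥ b‖ ≠ 1) {H : Matrix m m 𝕜} (hH : H.PosSemidef)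
    (hAH : (vecMulVec a (star a) - H).PosSemidef) (hBH : (vecMulVec b (star b) - H).PosSemidef) :
    ¬ (1 - vecMulVec a (star a) - vecMulVec b (star b) + H).PosSemidef := by
  intro hI
  have hHb := hH.mulVec_eq_zero_of_le_vecMulVec_of_le_vecMulVec ha hb hab₁ hAH hBH
  have hquad := hI.dotProduct_mulVec_nonneg b
  rw [add_mulVec, sub_mulVec, sub_mulVec, one_mulVec, hHb, vecMulVec_star_mulVec,
    vecMulVec_star_mulVec, hb, one_smul, add_zero, sub_sub_cancel_left, dotProduct_neg,
    dotProduct_smul, star_dotProduct b a, smul_eq_mul, RCLike.star_def, RCLike.mul_conj,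
    neg_nonneg] at hquad
  have hnorm : ‖star a ⬝ᵥ b‖ ^ 2 ≤ 0 := by exact_mod_cast hquad
  exact hab₀ (norm_eq_zero.mp (by nlinarith [norm_nonneg (star a ⬝ᵥ b)]))

end Matrix

theorem no_common_lower_bound_general {n : ℕ}
    (v₀ v₁ : Fin n → ℂ)
    (h₀ : star v₀ ⬝ᵥ v₀ = 1) (h₁ : star v₁ ⬝ᵥ v₁ = 1) (horth : star v₀ ⬝ᵥ v₁ = 0) :
    ¬ ∃ H₀ : Matrix (Fin n) (Fin n) ℂ,
        H₀.PosSemidef ∧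
        (vecMulVec v₀ (star v₀) - H₀).PosSemidef ∧
        (vecMulVec ((Real.sqrt 2 : ℂ)⁻¹ • (v₀ + v₁)) (star ((Real.sqrt 2 : ℂ)⁻¹ • (v₀ + v₁))) - H₀).PosSemidef ∧
        (1 - vecMulVec v₀ (star v₀)
           - vecMulVec ((Real.sqrt 2 : ℂ)⁻¹ • (v₀ + v₁)) (star ((Real.sqrt 2 : ℂ)⁻¹ • (v₀ + v₁)))
           + H₀).PosSemidef := by
  rintro ⟨H, hH, hA, hB, hI⟩
  have h₁₀ : star v₁ ⬝ᵥ v₀ = 0 := by rw [star_dotProduct, horth, star_zero]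
  have hsqrt : (Real.sqrt 2 : ℂ) ^ 2 = 2 := by norm_cast; simp
  have hc : star v₀ ⬝ᵥ (Real.sqrt 2 : ℂ)⁻¹ • (v₀ + v₁) = (Real.sqrt 2 : ℂ)⁻¹ := by
    rw [dotProduct_smul, dotProduct_add, h₀, horth, add_zero, smul_eq_mul, mul_one]
  have hp : star ((Real.sqrt 2 : ℂ)⁻¹ • (v₀ + v₁)) ⬝ᵥ (Real.sqrt 2 : ℂ)⁻¹ • (v₀ + v₁) = 1 := by
    simp only [star_smul, star_add, smul_dotProduct, dotProduct_smul, add_dotProduct,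
      dotProduct_add, h₀, h₁, horth, h₁₀, star_inv₀, Complex.star_def, Complex.conj_ofReal,
      add_zero, zero_add, smul_eq_mul, mul_one]
    rw [← two_mul, mul_left_comm, ← sq, inv_pow, hsqrt, mul_inv_cancel₀ two_ne_zero]
  refine not_posSemidef_one_sub_vecMulVec_sub_vecMulVec_add h₀ hp ?_ ?_ hH hA hB hI <;> rw [hc]
  · simp
  · norm_num [abs_of_nonneg, Real.sqrt_eq_one]

/-- with `A = |0⟩⟨0|` and `B = |+⟩⟨+|` (for orthonormal `|0⟩, |1⟩` and
`|+⟩ = (|0⟩+|1⟩)/√2`) in a space of dimension ≥ 2, there is no self-adjoint `H₀` with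
`H₀`, `A - H₀`, `B - H₀` and `I - A - B + H₀` all positive semidefinite. -/
theorem no_common_lower_bound {n : ℕ} (hn : 2 ≤ n)
    (v₀ v₁ : Fin n → ℂ)
    (h₀ : star v₀ ⬝ᵥ v₀ = 1) (h₁ : star v₁ ⬝ᵥ v₁ = 1) (horth : star v₀ ⬝ᵥ v₁ = 0) :
    ¬ ∃ H₀ : Matrix (Fin n) (Fin n) ℂ,
        H₀.PosSemidef ∧
        (vecMulVec v₀ (star v₀) - H₀).PosSemidef ∧
        (vecMulVec ((Real.sqrt 2 : ℂ)⁻¹ • (v₀ + v₁)) (star ((Real.sqrt 2 : ℂ)⁻¹ • (v₀ + v₁))) - H₀).PosSemidef ∧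
        (1 - vecMulVec v₀ (star v₀)
           - vecMulVec ((Real.sqrt 2 : ℂ)⁻¹ • (v₀ + v₁)) (star ((Real.sqrt 2 : ℂ)⁻¹ • (v₀ + v₁)))
           + H₀).PosSemidef :=
  no_common_lower_bound_general v₀ v₁ h₀ h₁ horth
end

section
/- Let H be a finite-dimensional complex inner product space with dim H ≥ 2. There do not exist a measurable space Λ, a convex-linear map μ from density operators on H to probability measures on Λ, and a map F from rank-1 orthogonal projections on H to measurable functions Λ → [0,1], such that Tr(ρE) = ∫_Λ F(E) dμ(ρ) for every density operator ρ and every rank-1 projection E. -/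
open MeasureTheory ComplexOrder Matrix

/-- A density operator: a positive semidefinite matrix of trace 1. -/
def IsDensityOperator {n : ℕ} (ρ : Matrix (Fin n) (Fin n) ℂ) : Prop :=
  ρ.PosSemidef ∧ ρ.trace = 1

/-- A rank-1 orthogonal projection. -/
def IsRankOneProjection {n : ℕ} (E : Matrix (Fin n) (Fin n) ℂ) : Prop :=
  E.IsHermitian ∧ E * E = E ∧ E.rank = 1

/-!
Write `P u = vecMulVec u (star u)`. Mixing `P u` and `P u'` with equal weights, for any
orthonormal pair `u, u'` of a real plane `span(e_i, e_j)`, gives one and the same state `T`.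
As `∫ F(P u) dμ(P u) = 1` and `∫ F(P u) dμ(P u') = 0`, the response `F(P u)` is `1` a.e. on the
`u`-half of `μ T` and `0` a.e. on the `u'`-half, so `∫ F(P u) (1 - F(P v)) dμ(T) = sin² ∠(u, v) / 2`
for unit vectors `u, v` of the plane. The pointwise inequality `a (1 - c) ≤ a (1 - b) + b (1 - c)`
on `[0, 1]` would then make `sin²` of angles subadditive, which fails for `π/6 + π/6 = π/3`.
-/

theorem one_sub_mem_Icc {a : ℝ} (ha : a ∈ Set.Icc (0 : ℝ) 1) : 1 - a ∈ Set.Icc (0 : ℝ) 1 :=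
  ⟨sub_nonneg.2 ha.2, sub_le_self _ ha.1⟩

theorem mul_one_sub_le_add {a b c : ℝ} (ha : a ∈ Set.Icc (0 : ℝ) 1) (hb : b ∈ Set.Icc (0 : ℝ) 1)
    (hc : c ∈ Set.Icc (0 : ℝ) 1) : a * (1 - c) ≤ a * (1 - b) + b * (1 - c) := by
  nlinarith [mul_nonneg (mul_nonneg hb.1 (sub_nonneg.2 ha.2)) (sub_nonneg.2 hc.2),
    mul_nonneg (mul_nonneg ha.1 hc.1) (sub_nonneg.2 hb.2)]

section Integral

variable {Λ : Type*} [MeasurableSpace Λ]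

theorem integrable_of_mem_Icc {m : Measure Λ} [IsFiniteMeasure m] {f : Λ → ℝ}
    (hf : Measurable f) (hf01 : ∀ x, f x ∈ Set.Icc (0 : ℝ) 1) : Integrable f m :=
  .of_bound hf.aestronglyMeasurable 1 <| ae_of_all _ fun x => by
    rw [Real.norm_eq_abs, abs_le]; constructor <;> linarith [(hf01 x).1, (hf01 x).2]

theorem ae_eq_one_of_integral_eq_one {m : Measure Λ} [IsProbabilityMeasure m] {f : Λ → ℝ}
    (hf : Integrable f m) (hf1 : ∀ x, f x ≤ 1) (h : ∫ x, f x ∂m = 1) : f =ᵐ[m] 1 :=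
  (integral_eq_iff_of_ae_le hf (integrable_const 1) (ae_of_all _ hf1)).1 (by simp [h])

theorem integral_mul_smul_add_smul_measure {m m' : Measure Λ} {f g : Λ → ℝ}
    (hg : Integrable g m) (hf : f =ᵐ[m] 1) (hf' : f =ᵐ[m'] 0) {a b : ENNReal} (ha : a ≠ ⊤)
    (hb : b ≠ ⊤) : ∫ x, f x * g x ∂(a • m + b • m') = a.toReal * ∫ x, g x ∂m := by
  have h : (fun x => f x * g x) =ᵐ[m] g := hf.mono fun x hx => by simp [hx]
  have h' : (fun x => f x * g x) =ᵐ[m'] 0 := hf'.mono fun x hx => by simp [hx]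
  rw [integral_add_measure ((hg.congr h.symm).smul_measure ha)
      (((integrable_zero _ _ _).congr h'.symm).smul_measure hb),
    integral_smul_measure, integral_smul_measure, integral_congr_ae h, integral_congr_ae h']
  simp

theorem integral_mul_one_sub_le {m : Measure Λ} [IsFiniteMeasure m] {f g h : Λ → ℝ}
    (hf : Measurable f) (hg : Measurable g) (hh : Measurable h)
    (hf01 : ∀ x, f x ∈ Set.Icc (0 : ℝ) 1) (hg01 : ∀ x, g x ∈ Set.Icc (0 : ℝ) 1)
    (hh01 : ∀ x, h x ∈ Set.Icc (0 : ℝ) 1) :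
    ∫ x, f x * (1 - h x) ∂m ≤ ∫ x, f x * (1 - g x) ∂m + ∫ x, g x * (1 - h x) ∂m := by
  have hint : ∀ {u v : Λ → ℝ}, Measurable u → Measurable v → (∀ x, u x ∈ Set.Icc (0 : ℝ) 1) →
      (∀ x, v x ∈ Set.Icc (0 : ℝ) 1) → Integrable (fun x => u x * (1 - v x)) m :=
    fun hu hv hu01 hv01 => integrable_of_mem_Icc (hu.mul (measurable_const.sub hv))
      fun x => unitInterval.mul_mem (hu01 x) (one_sub_mem_Icc (hv01 x))
  rw [← integral_add (hint hf hg hf01 hg01) (hint hg hh hg01 hh01)]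
  exact integral_mono (hint hf hh hf01 hh01) ((hint hf hg hf01 hg01).add (hint hg hh hg01 hh01))
    fun x => mul_one_sub_le_add (hf01 x) (hg01 x) (hh01 x)

end Integral

theorem Matrix.rank_pos_of_ne_zero {m n K : Type*} [Fintype n] [DecidableEq n] [Field K]
    {A : Matrix m n K} (hA : A ≠ 0) : 0 < A.rank := by
  rw [Matrix.rank, Module.finrank_pos_iff, Submodule.nontrivial_iff_ne_bot, ne_eq,
    LinearMap.range_eq_bot]
  rwa [← Matrix.toLin'_apply', map_eq_zero_iff _ Matrix.toLin'.injective]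

section Matrix

variable {n : ℕ}

theorem isDensityOperator_vecMulVec_star {v : Fin n → ℂ} (hv : star v ⬝ᵥ v = 1) :
    IsDensityOperator (vecMulVec v (star v)) :=
  ⟨posSemidef_vecMulVec_self_star v, by rw [trace_vecMulVec, dotProduct_comm, hv]⟩

theorem isRankOneProjection_vecMulVec_star {v : Fin n → ℂ} (hv : star v ⬝ᵥ v = 1) :
    IsRankOneProjection (vecMulVec v (star v)) := by
  refine ⟨(posSemidef_vecMulVec_self_star v).isHermitian, ?_,
    (rank_vecMulVec_le _ _).antisymm (rank_pos_of_ne_zero fun h => ?_)⟩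
  · rw [vecMulVec_mul_vecMulVec, hv, one_smul]
  · simpa [h] using (isDensityOperator_vecMulVec_star hv).2

theorem trace_vecMulVec_star_mul_vecMulVec_star (u v : Fin n → ℂ) :
    (vecMulVec u (star u) * vecMulVec v (star v)).trace = ((‖star u ⬝ᵥ v‖ ^ 2 : ℝ) : ℂ) := by
  rw [vecMulVec_mul_vecMulVec, trace_vecMulVec, dotProduct_smul, smul_eq_mul,
    dotProduct_comm u, star_dotProduct, Complex.star_def, Complex.conj_mul', Complex.norm_conj]
  push_cast; rfl

noncomputable def planeVec (i j : Fin n) (θ : ℝ) : Fin n → ℂ :=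
  (Real.cos θ : ℂ) • Pi.single i 1 + (Real.sin θ : ℂ) • Pi.single j 1

theorem star_planeVec (i j : Fin n) (θ : ℝ) : star (planeVec i j θ) = planeVec i j θ := by
  simp only [planeVec, star_add, star_smul, Pi.star_single, star_one, Complex.star_def,
    Complex.conj_ofReal]

theorem star_planeVec_dotProduct_planeVec {i j : Fin n} (hij : i ≠ j) (α β : ℝ) :
    star (planeVec i j α) ⬝ᵥ planeVec i j β = Real.cos (α - β) := by
  rw [star_planeVec]
  simp [planeVec, dotProduct_add, hij, hij.symm, Real.cos_sub]
  ring

theorem star_planeVec_dotProduct_self {i j : Fin n} (hij : i ≠ j) (θ : ℝ) :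
    star (planeVec i j θ) ⬝ᵥ planeVec i j θ = 1 := by
  rw [star_planeVec_dotProduct_planeVec hij, sub_self, Real.cos_zero, Complex.ofReal_one]

noncomputable def planeMixedState (i j : Fin n) : Matrix (Fin n) (Fin n) ℂ :=
  (1 / 2 : ℝ) • (vecMulVec (Pi.single i 1) (Pi.single i 1)
    + vecMulVec (Pi.single j 1) (Pi.single j 1))

theorem planeMixedState_eq (i j : Fin n) (θ : ℝ) :
    planeMixedState i j = (1 / 2 : ℝ) • vecMulVec (planeVec i j θ) (star (planeVec i j θ))
      + (1 - 1 / 2 : ℝ) • vecMulVec (planeVec i j (θ + Real.pi / 2))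
        (star (planeVec i j (θ + Real.pi / 2))) := by
  rw [planeMixedState, star_planeVec, star_planeVec, planeVec, planeVec,
    Real.cos_add_pi_div_two, Real.sin_add_pi_div_two]
  simp only [vecMulVec_add, add_vecMulVec, smul_vecMulVec, vecMulVec_smul]
  push_cast
  linear_combination (norm := module) (-1 / 2 : ℂ) • Complex.cos_sq_add_sin_sq (θ : ℂ) •
    (vecMulVec (Pi.single i (1 : ℂ)) (Pi.single i 1) + vecMulVec (Pi.single j 1) (Pi.single j 1))

end Matrix

structure ExpectationRepresentation (n : ℕ) (Λ : Type) [MeasurableSpace Λ] where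
  μ : Matrix (Fin n) (Fin n) ℂ → Measure Λ
  F : Matrix (Fin n) (Fin n) ℂ → Λ → ℝ
  isProbabilityMeasure : ∀ ρ, IsDensityOperator ρ → IsProbabilityMeasure (μ ρ)
  convex : ∀ (a : ℝ) (ρ₁ ρ₂ : Matrix (Fin n) (Fin n) ℂ), 0 ≤ a → a ≤ 1 →
    IsDensityOperator ρ₁ → IsDensityOperator ρ₂ →
    μ (a • ρ₁ + (1 - a) • ρ₂) = (ENNReal.ofReal a) • μ ρ₁ + (ENNReal.ofReal (1 - a)) • μ ρ₂
  response : ∀ E, IsRankOneProjection E → Measurable (F E) ∧ ∀ lam, F E lam ∈ Set.Icc (0 : ℝ) 1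
  trace_mul : ∀ ρ E, IsDensityOperator ρ → IsRankOneProjection E →
    (ρ * E).trace = ((∫ lam, F E lam ∂(μ ρ) : ℝ) : ℂ)

namespace ExpectationRepresentation

variable {n : ℕ} {Λ : Type} [MeasurableSpace Λ] (R : ExpectationRepresentation n Λ)
  {u u' v : Fin n → ℂ} {i j : Fin n}

theorem isProbabilityMeasure_vecMulVec_star (hv : star v ⬝ᵥ v = 1) :
    IsProbabilityMeasure (R.μ (vecMulVec v (star v))) :=
  R.isProbabilityMeasure _ (isDensityOperator_vecMulVec_star hv)

theorem measurable_F (hv : star v ⬝ᵥ v = 1) : Measurable (R.F (vecMulVec v (star v))) :=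
  (R.response _ (isRankOneProjection_vecMulVec_star hv)).1

theorem F_mem_Icc (hv : star v ⬝ᵥ v = 1) (x : Λ) :
    R.F (vecMulVec v (star v)) x ∈ Set.Icc (0 : ℝ) 1 :=
  (R.response _ (isRankOneProjection_vecMulVec_star hv)).2 x

theorem integrable_F {m : Measure Λ} [IsFiniteMeasure m] (hv : star v ⬝ᵥ v = 1) :
    Integrable (R.F (vecMulVec v (star v))) m :=
  integrable_of_mem_Icc (R.measurable_F hv) (R.F_mem_Icc hv)

theorem integral_F (hu : star u ⬝ᵥ u = 1) (hv : star v ⬝ᵥ v = 1) :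
    ∫ x, R.F (vecMulVec v (star v)) x ∂(R.μ (vecMulVec u (star u))) = ‖star u ⬝ᵥ v‖ ^ 2 := by
  have h := R.trace_mul _ _ (isDensityOperator_vecMulVec_star hu)
    (isRankOneProjection_vecMulVec_star hv)
  rw [trace_vecMulVec_star_mul_vecMulVec_star] at h
  exact_mod_cast h.symm

theorem μ_convex (hu : star u ⬝ᵥ u = 1) (hu' : star u' ⬝ᵥ u' = 1) {a : ℝ} (ha0 : 0 ≤ a)
    (ha1 : a ≤ 1) :
    R.μ (a • vecMulVec u (star u) + (1 - a) • vecMulVec u' (star u')) =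
      ENNReal.ofReal a • R.μ (vecMulVec u (star u))
        + ENNReal.ofReal (1 - a) • R.μ (vecMulVec u' (star u')) :=
  R.convex a _ _ ha0 ha1 (isDensityOperator_vecMulVec_star hu)
    (isDensityOperator_vecMulVec_star hu')

theorem isProbabilityMeasure_convex (hu : star u ⬝ᵥ u = 1) (hu' : star u' ⬝ᵥ u' = 1) {a : ℝ}
    (ha0 : 0 ≤ a) (ha1 : a ≤ 1) :
    IsProbabilityMeasure (R.μ (a • vecMulVec u (star u) + (1 - a) • vecMulVec u' (star u'))) := by
  have := R.isProbabilityMeasure_vecMulVec_star hu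
  have := R.isProbabilityMeasure_vecMulVec_star hu'
  constructor
  rw [R.μ_convex hu hu' ha0 ha1, Measure.add_apply, Measure.smul_apply, Measure.smul_apply,
    measure_univ, measure_univ, smul_eq_mul, smul_eq_mul, mul_one, mul_one,
    ← ENNReal.ofReal_add ha0 (sub_nonneg.2 ha1), add_sub_cancel, ENNReal.ofReal_one]

theorem integral_F_mul (hu : star u ⬝ᵥ u = 1) (hu' : star u' ⬝ᵥ u' = 1) (huu' : star u ⬝ᵥ u' = 0)
    {a : ℝ} (ha0 : 0 ≤ a) (ha1 : a ≤ 1) {g : Λ → ℝ}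
    (hg : Integrable g (R.μ (vecMulVec u (star u)))) :
    ∫ x, R.F (vecMulVec u (star u)) x * g x
        ∂(R.μ (a • vecMulVec u (star u) + (1 - a) • vecMulVec u' (star u'))) =
      a * ∫ x, g x ∂(R.μ (vecMulVec u (star u))) := by
  have := R.isProbabilityMeasure_vecMulVec_star hu
  have := R.isProbabilityMeasure_vecMulVec_star hu'
  have h1 : R.F (vecMulVec u (star u)) =ᵐ[R.μ (vecMulVec u (star u))] 1 :=
    ae_eq_one_of_integral_eq_one (R.integrable_F hu) (fun x => (R.F_mem_Icc hu x).2)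
      (by simp [R.integral_F hu hu, hu])
  have h0 : R.F (vecMulVec u (star u)) =ᵐ[R.μ (vecMulVec u' (star u'))] 0 :=
    (integral_eq_zero_iff_of_nonneg (fun x => (R.F_mem_Icc hu x).1) (R.integrable_F hu)).1
      (by simp [R.integral_F hu' hu, star_dotProduct u', huu'])
  rw [R.μ_convex hu hu' ha0 ha1, integral_mul_smul_add_smul_measure hg h1 h0 ENNReal.ofReal_ne_top
    ENNReal.ofReal_ne_top, ENNReal.toReal_ofReal ha0]

theorem integral_F_mul_one_sub (hu : star u ⬝ᵥ u = 1) (hu' : star u' ⬝ᵥ u' = 1)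
    (huu' : star u ⬝ᵥ u' = 0) {a : ℝ} (ha0 : 0 ≤ a) (ha1 : a ≤ 1) (hv : star v ⬝ᵥ v = 1) :
    ∫ x, R.F (vecMulVec u (star u)) x * (1 - R.F (vecMulVec v (star v)) x)
        ∂(R.μ (a • vecMulVec u (star u) + (1 - a) • vecMulVec u' (star u'))) =
      a * (1 - ‖star u ⬝ᵥ v‖ ^ 2) := by
  have := R.isProbabilityMeasure_vecMulVec_star hu
  rw [R.integral_F_mul hu hu' huu' ha0 ha1 (g := fun x => 1 - R.F (vecMulVec v (star v)) x)
      ((integrable_const 1).sub (R.integrable_F hv)),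
    integral_sub (integrable_const 1) (R.integrable_F hv), R.integral_F hu hv]
  simp

theorem isProbabilityMeasure_planeMixedState (hij : i ≠ j) :
    IsProbabilityMeasure (R.μ (planeMixedState i j)) := by
  rw [planeMixedState_eq i j 0]
  exact R.isProbabilityMeasure_convex (star_planeVec_dotProduct_self hij _)
    (star_planeVec_dotProduct_self hij _) (by norm_num) (by norm_num)

theorem integral_F_planeVec_mul_one_sub (hij : i ≠ j) (α β : ℝ) :
    ∫ x, R.F (vecMulVec (planeVec i j α) (star (planeVec i j α))) x
        * (1 - R.F (vecMulVec (planeVec i j β) (star (planeVec i j β))) x)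
        ∂(R.μ (planeMixedState i j)) = Real.sin (α - β) ^ 2 / 2 := by
  have horth : star (planeVec i j α) ⬝ᵥ planeVec i j (α + Real.pi / 2) = 0 := by
    rw [star_planeVec_dotProduct_planeVec hij, sub_add_cancel_left, Real.cos_neg,
      Real.cos_pi_div_two, Complex.ofReal_zero]
  rw [planeMixedState_eq i j α, R.integral_F_mul_one_sub (star_planeVec_dotProduct_self hij _)
    (star_planeVec_dotProduct_self hij _) horth (by norm_num) (by norm_num)
    (star_planeVec_dotProduct_self hij _), star_planeVec_dotProduct_planeVec hij,
    Complex.norm_real, Real.norm_eq_abs, sq_abs, Real.sin_sq]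
  ring

end ExpectationRepresentation

/-- Expectation no-go theorem: for `dim H ≥ 2` there is no expectation
representation: no measurable space `Λ`, convex-linear map `μ` from density operators
to probability measures on `Λ`, and map `F` from rank-1 projections to measurable
functions `Λ → [0,1]` with `Tr(ρE) = ∫ F(E) dμ(ρ)` for all density `ρ` and rank-1
projections `E`. -/
theorem expectation_no_go {n : ℕ} (hn : 2 ≤ n) :
    ¬ ∃ (Λ : Type) (_ : MeasurableSpace Λ)
        (μ : Matrix (Fin n) (Fin n) ℂ → Measure Λ)
        (F : Matrix (Fin n) (Fin n) ℂ → Λ → ℝ),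
        (∀ ρ, IsDensityOperator ρ → IsProbabilityMeasure (μ ρ)) ∧
        (∀ (a : ℝ) (ρ₁ ρ₂ : Matrix (Fin n) (Fin n) ℂ), 0 ≤ a → a ≤ 1 →
          IsDensityOperator ρ₁ → IsDensityOperator ρ₂ →
          μ (a • ρ₁ + (1 - a) • ρ₂)
            = (ENNReal.ofReal a) • μ ρ₁ + (ENNReal.ofReal (1 - a)) • μ ρ₂) ∧
        (∀ E, IsRankOneProjection E →
          Measurable (F E) ∧ ∀ lam, F E lam ∈ Set.Icc (0 : ℝ) 1) ∧
        (∀ ρ E, IsDensityOperator ρ → IsRankOneProjection E →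
          (ρ * E).trace = ((∫ lam, F E lam ∂(μ ρ) : ℝ) : ℂ)) := by
  rintro ⟨Λ, _, μ, F, hprob, hconv, hF, htr⟩
  let R : ExpectationRepresentation n Λ := ⟨μ, F, hprob, hconv, hF, htr⟩
  obtain ⟨i, j, hij⟩ : ∃ i j : Fin n, i ≠ j := ⟨⟨0, by omega⟩, ⟨1, by omega⟩, by simp⟩
  have := R.isProbabilityMeasure_planeMixedState hij
  have hunit := star_planeVec_dotProduct_self hij
  have htri := integral_mul_one_sub_le (m := R.μ (planeMixedState i j))
    (R.measurable_F (hunit 0)) (R.measurable_F (hunit (Real.pi / 6)))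
    (R.measurable_F (hunit (Real.pi / 3))) (R.F_mem_Icc (hunit _)) (R.F_mem_Icc (hunit _))
    (R.F_mem_Icc (hunit _))
  simp only [R.integral_F_planeVec_mul_one_sub hij, zero_sub, Real.sin_neg, neg_sq,
    show Real.pi / 6 - Real.pi / 3 = -(Real.pi / 6) by ring, Real.sin_pi_div_six,
    Real.sin_pi_div_three, div_pow, Real.sq_sqrt (zero_le_three : (0 : ℝ) ≤ 3)] at htri
  norm_num at htri
end

section
/- Let H be a closed subspace of a Hilbert space H'. If there exists an expectation representation (Λ, μ, F) for H', then there exists an expectation representation for H. -/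
open MeasureTheory ComplexOrder
open scoped InnerProductSpace

/-- A density operator on an inner product space: positive, symmetric, trace 1. -/
def DensityOp {E : Type*} [NormedAddCommGroup E] [InnerProductSpace ℂ E]
    (ρ : E →ₗ[ℂ] E) : Prop :=
  ρ.IsSymmetric ∧ (∀ x : E, 0 ≤ ⟪x, ρ x⟫_ℂ) ∧ LinearMap.trace ℂ E ρ = 1

/-- A rank-1 orthogonal projection `|v⟩⟨v|` for a unit vector `v`. -/
def RankOneProj {E : Type*} [NormedAddCommGroup E] [InnerProductSpace ℂ E]
    (P : E →ₗ[ℂ] E) : Prop :=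
  ∃ v : E, ‖v‖ = 1 ∧ ∀ x : E, P x = ⟪v, x⟫_ℂ • v

/-- An expectation representation: a measurable space `Λ`, a convex-linear map `μ`
from density operators to probability measures on `Λ`, and a map `F` from rank-1
projections to measurable `[0,1]`-valued functions, with `Tr(ρE) = ∫ F(E) dμ(ρ)`. -/
def HasExpectationRepresentation (E : Type*) [NormedAddCommGroup E]
    [InnerProductSpace ℂ E] : Prop :=
  ∃ (Λ : Type) (_ : MeasurableSpace Λ) (μ : (E →ₗ[ℂ] E) → Measure Λ)
    (F : (E →ₗ[ℂ] E) → Λ → ℝ),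
    (∀ ρ, DensityOp ρ → IsProbabilityMeasure (μ ρ)) ∧
    (∀ (a : ℝ) (ρ₁ ρ₂ : E →ₗ[ℂ] E), 0 ≤ a → a ≤ 1 → DensityOp ρ₁ → DensityOp ρ₂ →
      μ (a • ρ₁ + (1 - a) • ρ₂)
        = (ENNReal.ofReal a) • μ ρ₁ + (ENNReal.ofReal (1 - a)) • μ ρ₂) ∧
    (∀ P, RankOneProj P → Measurable (F P) ∧ ∀ lam, F P lam ∈ Set.Icc (0 : ℝ) 1) ∧
    (∀ ρ P, DensityOp ρ → RankOneProj P →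
      LinearMap.trace ℂ E (ρ ∘ₗ P) = ((∫ lam, F P lam ∂(μ ρ) : ℝ) : ℂ))

/-! Compressing by the inclusion `i : K → H'` and the orthogonal projection `p : H' → K`,
`T ↦ i T p` sends density operators to density operators and rank-one projections to rank-one
projections, is affine, and preserves traces of products because `p i = id`; so `μ` and `F`
for `H'` pull back to `K`. -/

namespace Submodule

section RCLike

variable {𝕜 E : Type*} [RCLike 𝕜] [NormedAddCommGroup E] [InnerProductSpace 𝕜 E]
  (K : Submodule 𝕜 E) [K.HasOrthogonalProjection]

noncomputable def liftOp (T : K →ₗ[𝕜] K) : E →ₗ[𝕜] E :=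
  K.subtype ∘ₗ T ∘ₗ K.orthogonalProjectionOnto.toLinearMap

@[simp]
lemma liftOp_apply (T : K →ₗ[𝕜] K) (x : E) :
    K.liftOp T x = T (K.orthogonalProjectionOnto x) := rfl

lemma inner_liftOp_left (T : K →ₗ[𝕜] K) (x y : E) :
    ⟪K.liftOp T x, y⟫_𝕜 = ⟪T (K.orthogonalProjectionOnto x), K.orthogonalProjectionOnto y⟫_𝕜 := by
  simp

lemma inner_liftOp_right (T : K →ₗ[𝕜] K) (x y : E) :
    ⟪x, K.liftOp T y⟫_𝕜 = ⟪K.orthogonalProjectionOnto x, T (K.orthogonalProjectionOnto y)⟫_𝕜 := by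
  simp

lemma liftOp_comp (S T : K →ₗ[𝕜] K) : K.liftOp S ∘ₗ K.liftOp T = K.liftOp (S ∘ₗ T) := by
  ext x
  simp

lemma liftOp_add (S T : K →ₗ[𝕜] K) : K.liftOp (S + T) = K.liftOp S + K.liftOp T := by
  ext x
  simp

lemma isSymmetric_liftOp {T : K →ₗ[𝕜] K} (hT : T.IsSymmetric) : (K.liftOp T).IsSymmetric :=
  fun x y ↦ by rw [inner_liftOp_left, inner_liftOp_right, hT]

lemma trace_liftOp [FiniteDimensional 𝕜 E] (T : K →ₗ[𝕜] K) :
    LinearMap.trace 𝕜 E (K.liftOp T) = LinearMap.trace 𝕜 K T := by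
  rw [liftOp, LinearMap.trace_comp_comm']
  congr 1
  ext x
  simp

end RCLike

section Complex

variable {H : Type*} [NormedAddCommGroup H] [InnerProductSpace ℂ H]
  (K : Submodule ℂ H) [K.HasOrthogonalProjection]

lemma liftOp_real_smul (c : ℝ) (T : K →ₗ[ℂ] K) : K.liftOp (c • T) = c • K.liftOp T := by
  ext x
  simp

lemma densityOp_liftOp [FiniteDimensional ℂ H] {ρ : K →ₗ[ℂ] K} (hρ : DensityOp ρ) :
    DensityOp (K.liftOp ρ) := by
  obtain ⟨hsymm, hpos, htrace⟩ := hρ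
  exact ⟨K.isSymmetric_liftOp hsymm, fun x ↦ (K.inner_liftOp_right ρ x x).symm ▸ hpos _,
    (K.trace_liftOp ρ).trans htrace⟩

lemma rankOneProj_liftOp {P : K →ₗ[ℂ] K} (hP : RankOneProj P) : RankOneProj (K.liftOp P) := by
  obtain ⟨v, hv, hPv⟩ := hP
  refine ⟨v, by simpa using hv, fun x ↦ ?_⟩
  simp [hPv]

end Complex

end Submodule

/-- First bootstrapping theorem: if a (finite-dimensional, hence closed)
subspace `K` sits inside `H'` and `H'` has an expectation representation, then so
does `K`. -/
theorem expectationRepresentation_of_subspace {H' : Type*} [NormedAddCommGroup H']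
    [InnerProductSpace ℂ H'] [FiniteDimensional ℂ H'] (K : Submodule ℂ H')
    (h : HasExpectationRepresentation H') : HasExpectationRepresentation K := by
  obtain ⟨Λ, mΛ, μ, F, hprob, hconv, hF, htrace⟩ := h
  refine ⟨Λ, mΛ, fun ρ ↦ μ (K.liftOp ρ), fun P ↦ F (K.liftOp P),
    fun ρ hρ ↦ hprob _ (K.densityOp_liftOp hρ), fun a ρ₁ ρ₂ ha₀ ha₁ hρ₁ hρ₂ ↦ ?_,
    fun P hP ↦ hF _ (K.rankOneProj_liftOp hP), fun ρ P hρ hP ↦ ?_⟩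
  · dsimp only
    rw [K.liftOp_add, K.liftOp_real_smul, K.liftOp_real_smul]
    exact hconv a _ _ ha₀ ha₁ (K.densityOp_liftOp hρ₁) (K.densityOp_liftOp hρ₂)
  · rw [← K.trace_liftOp, ← K.liftOp_comp]
    exact htrace _ _ (K.densityOp_liftOp hρ) (K.rankOneProj_liftOp hP)
end
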